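/- arXiv:1605.01376 — 3 statements merged into one kernel-verified Lean document; each statement's English description precedes it below -/
import Mathlib

section
/- Let g be a finite-dimensional Lie algebra with structure constants C^λ_{μν}, and let x̂_ρ = x_τ φ^τ_ρ be the symmetric-ordering realization of the generators of U(g) inside the completed Weyl algebra Â_n, where φ = -C/(e^{-C}-1) with C^α_β = C^α_{βγ}∂^γ. Then for all k ≥ 0, ad^k(∂^ρ ⊗ x̂_ρ)(1 ⊗ x̂_μ) = ((-C)^k)^τ_μ ⊗ x̂_τ, computed in the completed tensor square of Â_n. -/
/-! The coefficients `(-C)^τ_μ` are polynomials in the pairwise commuting `∂`'s, which commute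
with `p = ∂^ρ ⊗ x̂_ρ`. So they can be pulled out of `ad p`, and `ad p` acts on the span of the
`1 ⊗ x̂_τ` over this commutative algebra through the single matrix `-C`, because
`ad p (1 ⊗ x̂_τ) = ∂^ρ ⊗ [x̂_ρ, x̂_τ] = (-C)^l_τ ⊗ x̂_l` by antisymmetry of the structure
constants. Iterating, `ad p` acts through the powers of `-C`. -/

open Finset
open scoped IsMulCommutative

section IterateCommutator

variable {R H ι : Type*} [CommRing R] [Ring H] [Fintype ι] [DecidableEq ι]

theorem commutator_mul_left_of_commute {p a y : H} (ha : Commute a p) :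
    p * (a * y) - a * y * p = a * (p * y - y * p) := by
  rw [← mul_assoc, ← ha.eq, mul_sub, mul_assoc, mul_assoc]

theorem iterate_commutator_eq_sum_pow_mul (f : R →+* H) {p : H} (hfp : ∀ r, Commute (f r) p)
    (x : ι → H) (M : Matrix ι ι R) (hx : ∀ τ, p * x τ - x τ * p = ∑ l, f (M l τ) * x l)
    (K : ℕ) (μ : ι) :
    (fun z => p * z - z * p)^[K] (x μ) = ∑ τ, f ((M ^ K) τ μ) * x τ := by
  induction K with
  | zero => simp [Matrix.one_apply]
  | succ K ih =>
    rw [Function.iterate_succ_apply', ih, mul_sum, sum_mul, ← sum_sub_distrib]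
    simp_rw [commutator_mul_left_of_commute (hfp _), hx, mul_sum, ← mul_assoc, ← map_mul]
    rw [sum_comm]
    simp_rw [← sum_mul, ← map_sum, pow_succ', Matrix.mul_apply, mul_comm]

end IterateCommutator

theorem commutator_sum_mul_eq_sum_structureConst {k H : Type*} [CommSemiring k] [Ring H]
    [Algebra k H] {n : ℕ} (c : Fin n → Fin n → Fin n → k) (D Xh : Fin n → H)
    (hDX : ∀ μ ν, Commute (D μ) (Xh ν))
    (hXX : ∀ μ ν, Xh μ * Xh ν - Xh ν * Xh μ = ∑ l : Fin n, c l μ ν • Xh l) (τ : Fin n) :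
    (∑ ρ, D ρ * Xh ρ) * Xh τ - Xh τ * ∑ ρ, D ρ * Xh ρ
      = ∑ l, (∑ ρ, c l ρ τ • D ρ) * Xh l := by
  rw [sum_mul, mul_sum, ← sum_sub_distrib]
  simp_rw [sum_mul, smul_mul_assoc]
  rw [sum_comm]
  refine sum_congr rfl fun ρ _ => ?_
  rw [← mul_assoc, ← (hDX ρ τ).eq, mul_assoc, mul_assoc, ← mul_sub, hXX, mul_sum]
  simp_rw [mul_smul_comm]

theorem statement5_general {k H : Type*} [Field k] [Ring H] [Algebra k H] {n : ℕ}
    (c : Fin n → Fin n → Fin n → k)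
    (hanti : ∀ l a b : Fin n, c l a b = - c l b a)
    (D Xh : Fin n → H)
    (hDD : ∀ μ ν, Commute (D μ) (D ν))
    (hDX : ∀ μ ν, Commute (D μ) (Xh ν))
    (hXX : ∀ μ ν, Xh μ * Xh ν - Xh ν * Xh μ = ∑ l : Fin n, c l μ ν • Xh l)
    (p : H) (hp : p = ∑ ρ : Fin n, D ρ * Xh ρ)
    (Cop : Matrix (Fin n) (Fin n) H)
    (hCop : ∀ a b, Cop a b = ∑ g : Fin n, c a b g • D g)
    (K : ℕ) (μ : Fin n) :
    (fun z => p * z - z * p)^[K] (Xh μ) = ∑ τ : Fin n, ((-Cop) ^ K) τ μ * Xh τ := by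
  set A := Algebra.adjoin k (Set.range D)
  have : IsMulCommutative A := Algebra.isMulCommutative_adjoin k <| by
    rintro _ ⟨a, rfl⟩ _ ⟨b, rfl⟩
    exact hDD a b
  let M : Matrix (Fin n) (Fin n) A := Matrix.of fun a b =>
    ∑ g, c a b g • ⟨D g, Algebra.subset_adjoin ⟨g, rfl⟩⟩
  have hM : -Cop = A.val.mapMatrix (-M) := by
    ext a b
    simp [M, hCop]
  have hA : A ≤ Subalgebra.centralizer k {p} := Algebra.adjoin_le <| by
    rintro _ ⟨g, rfl⟩
    rw [SetLike.mem_coe, Subalgebra.mem_centralizer_iff]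
    rintro _ rfl
    rw [hp]
    exact (Commute.sum_right _ _ _ fun ρ _ => (hDD g ρ).mul_right (hDX g ρ)).eq.symm
  rw [hM, ← map_pow]
  refine iterate_commutator_eq_sum_pow_mul A.val.toRingHom
    (fun r => ((Subalgebra.mem_centralizer_iff k).1 (hA r.2) p rfl).symm) Xh _ (fun τ => ?_) K μ
  rw [hp, commutator_sum_mul_eq_sum_structureConst c D Xh hDX hXX]
  refine sum_congr rfl fun l _ => ?_
  simp [M, hanti l _ τ]

/-- with `D μ` playing the role of `∂^μ ⊗ 1` and `Xh μ` playing the role of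
`1 ⊗ x̂_μ` (so that all `D` commute with all `Xh`, the `D`'s commute among themselves and the
`Xh`'s satisfy the Lie algebra relations with structure constants `c`), and
`p = ∑_ρ D ρ * Xh ρ` playing the role of `∂^ρ ⊗ x̂_ρ`, one has for all `K ≥ 0`:
`ad^K(∂^ρ⊗x̂_ρ)(1⊗x̂_μ) = ((-C)^K)^τ_μ ⊗ x̂_τ`, where `C^α_β = C^α_{βγ} ∂^γ`. -/
theorem statement5 {k H : Type*} [Field k] [CharZero k] [Ring H] [Algebra k H] {n : ℕ}
    (c : Fin n → Fin n → Fin n → k)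
    (hanti : ∀ l a b : Fin n, c l a b = - c l b a)
    (D Xh : Fin n → H)
    (hDD : ∀ μ ν, Commute (D μ) (D ν))
    (hDX : ∀ μ ν, Commute (D μ) (Xh ν))
    (hXX : ∀ μ ν, Xh μ * Xh ν - Xh ν * Xh μ = ∑ l : Fin n, c l μ ν • Xh l)
    (p : H) (hp : p = ∑ ρ : Fin n, D ρ * Xh ρ)
    (Cop : Matrix (Fin n) (Fin n) H)
    (hCop : ∀ a b, Cop a b = ∑ g : Fin n, c a b g • D g)
    (K : ℕ) (μ : Fin n) :
    (fun z => p * z - z * p)^[K] (Xh μ) = ∑ τ : Fin n, ((-Cop) ^ K) τ μ * Xh τ :=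
  statement5_general c hanti D Xh hDD hDX hXX p hp Cop hCop K μ
end

section
/- Let H be the completed Heisenberg double H_g = U(g) ♯_φ Ŝ(g*) with source map α : U(g) → H, α(u) = u♯1, and target map β : U(g)^op → H determined by β(x̂_μ) = ŷ_μ = x̂_λ ♯ O^λ_μ where O = e^C. Let I be the right ideal of H ⊗ H generated by β(u) ⊗ 1 - 1 ⊗ α(u) for all u ∈ U(g). Then I is equal to the right ideal generated by the n elements x̂_ρ ⊗ 1 - O^τ_ρ ⊗ x̂_τ, ρ = 1,...,n. -/
open TensorProduct MulOpposite

/-!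
`d u = β u ⊗ 1 - 1 ⊗ α u` is a twisted derivation, `d (u v) = d v · (β u ⊗ 1) + d u · (1 ⊗ α v)`,
so the elements `u` with `d u` in a right ideal form a subalgebra, and `I` is already generated by
the `d x̂_μ`. With `a_σ = x̂_σ ⊗ 1`, `b_τ = 1 ⊗ x̂_τ` and the matrices `P = O ⊗ 1`, `Q = O⁻¹ ⊗ 1`,
these are the entries of `a Q - b = (a - b P) Q`, and right multiplication of a row vector by an
invertible matrix does not change the right ideal spanned by its entries.
-/

section RightIdealEqualizer

variable {k U T : Type*} [CommRing k] [Ring U] [Ring T] [Algebra k U] [Algebra k T]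

def rightIdealEqualizer (f : Uᵐᵒᵖ →ₐ[k] T) (g : U →ₐ[k] T)
    (hfg : ∀ u v : U, Commute (f (op u)) (g v)) (J : Submodule Tᵐᵒᵖ T) : Subalgebra k U where
  carrier := {u | f (op u) - g u ∈ J}
  mul_mem' {u v} hu hv := by
    have hd : f (op (u * v)) - g (u * v)
        = (f (op v) - g v) * f (op u) + (f (op u) - g u) * g v := by
      rw [op_mul, map_mul, map_mul, sub_mul, sub_mul, ← (hfg u v).eq]
      abel
    have h := J.add_mem (J.smul_mem (op (f (op u))) hv) (J.smul_mem (op (g v)) hu)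
    rwa [op_smul_eq_mul, op_smul_eq_mul, ← hd] at h
  add_mem' {u v} hu hv := by
    show f (op (u + v)) - g (u + v) ∈ J
    rw [op_add, map_add, map_add, add_sub_add_comm]
    exact J.add_mem hu hv
  algebraMap_mem' r := by
    show f (op (algebraMap k U r)) - g (algebraMap k U r) ∈ J
    rw [← MulOpposite.algebraMap_apply, AlgHom.commutes, AlgHom.commutes, sub_self]
    exact J.zero_mem

theorem span_sub_eq_span_range_of_adjoin_eq_top (f : Uᵐᵒᵖ →ₐ[k] T) (g : U →ₐ[k] T)
    (hfg : ∀ u v : U, Commute (f (op u)) (g v)) {ι : Type*} (x : ι → U)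
    (hx : Algebra.adjoin k (Set.range x) = ⊤) :
    Submodule.span Tᵐᵒᵖ {z : T | ∃ u : U, z = f (op u) - g u}
      = Submodule.span Tᵐᵒᵖ (Set.range fun i => f (op (x i)) - g (x i)) := by
  set J := Submodule.span Tᵐᵒᵖ (Set.range fun i => f (op (x i)) - g (x i))
  refine le_antisymm (Submodule.span_le.mpr ?_) (Submodule.span_mono ?_)
  · have hle : Algebra.adjoin k (Set.range x) ≤ rightIdealEqualizer f g hfg J :=
      Algebra.adjoin_le (by rintro _ ⟨i, rfl⟩; exact Submodule.subset_span ⟨i, rfl⟩)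
    rintro _ ⟨u, rfl⟩
    exact hle (hx ▸ Algebra.mem_top)
  · rintro _ ⟨i, rfl⟩
    exact ⟨x i, rfl⟩

end RightIdealEqualizer

section VecMul

variable {T : Type*} [Ring T] {m n : Type*} [Fintype m]

theorem span_range_vecMul_le (v : m → T) (M : Matrix m n T) :
    Submodule.span Tᵐᵒᵖ (Set.range (Matrix.vecMul v M)) ≤ Submodule.span Tᵐᵒᵖ (Set.range v) := by
  refine Submodule.span_le.mpr ?_
  rintro _ ⟨j, rfl⟩
  refine Submodule.sum_mem _ fun i _ => ?_
  rw [← op_smul_eq_mul]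
  exact Submodule.smul_mem _ _ (Submodule.subset_span ⟨i, rfl⟩)

theorem span_range_vecMul_of_mul_eq_one [Fintype n] [DecidableEq m] (v : m → T)
    {M : Matrix m n T} {N : Matrix n m T} (h : M * N = 1) :
    Submodule.span Tᵐᵒᵖ (Set.range (Matrix.vecMul v M)) = Submodule.span Tᵐᵒᵖ (Set.range v) := by
  refine le_antisymm (span_range_vecMul_le v M) ?_
  calc Submodule.span Tᵐᵒᵖ (Set.range v)
      = Submodule.span Tᵐᵒᵖ (Set.range (Matrix.vecMul (Matrix.vecMul v M) N)) := by
        rw [Matrix.vecMul_vecMul, h, Matrix.vecMul_one]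
    _ ≤ _ := span_range_vecMul_le _ N

end VecMul

theorem Matrix.of_mul_of_eq_one {R : Type*} [Semiring R] {n : Type*} [Fintype n] [DecidableEq n]
    {A B : n → n → R} (h : ∀ a b : n, ∑ s : n, A a s * B s b = if a = b then 1 else 0) :
    Matrix.of A * Matrix.of B = 1 :=
  Matrix.ext fun a b => by rw [Matrix.mul_apply, Matrix.one_apply, ← h]; rfl

theorem statement7_general {k U H : Type*} [Field k] [Ring U] [Ring H]
    [Algebra k U] [Algebra k H] {n : ℕ}
    (α : U →ₐ[k] H) (β : Uᵐᵒᵖ →ₐ[k] H)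
    (xh : Fin n → U)
    (hgen : Algebra.adjoin k (Set.range xh) = ⊤)
    (O Oinv : Fin n → Fin n → H)
    (hO1 : ∀ a b : Fin n, ∑ s : Fin n, O a s * Oinv s b = if a = b then 1 else 0)
    (hO2 : ∀ a b : Fin n, ∑ s : Fin n, Oinv a s * O s b = if a = b then 1 else 0)
    (hβ : ∀ μ : Fin n, β (op (xh μ)) = ∑ σ : Fin n, α (xh σ) * Oinv σ μ) :
    Submodule.span (H ⊗[k] H)ᵐᵒᵖ
        {z : H ⊗[k] H | ∃ u : U, z = β (op u) ⊗ₜ[k] (1 : H) - (1 : H) ⊗ₜ[k] α u}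
      = Submodule.span (H ⊗[k] H)ᵐᵒᵖ
        (Set.range fun ρ : Fin n =>
          α (xh ρ) ⊗ₜ[k] (1 : H) - ∑ τ : Fin n, O τ ρ ⊗ₜ[k] α (xh τ)) := by
  let ι₁ : H →ₐ[k] H ⊗[k] H := Algebra.TensorProduct.includeLeft
  let ι₂ : H →ₐ[k] H ⊗[k] H := Algebra.TensorProduct.includeRight
  have hcomm (u v : U) : Commute ((ι₁.comp β) (op u)) ((ι₂.comp α) v) := by
    simp only [Commute, SemiconjBy, AlgHom.comp_apply, ι₁, ι₂,
      Algebra.TensorProduct.includeLeft_apply, Algebra.TensorProduct.includeRight_apply,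
      Algebra.TensorProduct.tmul_mul_tmul, one_mul, mul_one]
  let a : Fin n → H ⊗[k] H := fun σ => α (xh σ) ⊗ₜ 1
  let b : Fin n → H ⊗[k] H := fun τ => 1 ⊗ₜ α (xh τ)
  let P := (Matrix.of O).map ι₁
  let Q := (Matrix.of Oinv).map ι₁
  have hPQ : P * Q = 1 := by rw [← Matrix.map_mul, Matrix.of_mul_of_eq_one hO1]; simp
  have hQP : Q * P = 1 := by rw [← Matrix.map_mul, Matrix.of_mul_of_eq_one hO2]; simp
  have hI : (fun μ => β (op (xh μ)) ⊗ₜ[k] (1 : H) - (1 : H) ⊗ₜ[k] α (xh μ))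
      = Matrix.vecMul (a - Matrix.vecMul b P) Q := by
    rw [Matrix.sub_vecMul, Matrix.vecMul_vecMul, hPQ, Matrix.vecMul_one]
    ext μ
    simp [Matrix.vecMul, dotProduct, hβ, a, b, Q, ι₁, sum_tmul]
  have hJ : (fun ρ => α (xh ρ) ⊗ₜ[k] (1 : H) - ∑ τ : Fin n, O τ ρ ⊗ₜ[k] α (xh τ))
      = a - Matrix.vecMul b P := by
    ext ρ
    simp [Matrix.vecMul, dotProduct, a, b, P, ι₁]
  calc _ = Submodule.span (H ⊗[k] H)ᵐᵒᵖ
          (Set.range fun μ => β (op (xh μ)) ⊗ₜ[k] (1 : H) - (1 : H) ⊗ₜ[k] α (xh μ)) :=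
        span_sub_eq_span_range_of_adjoin_eq_top _ _ hcomm xh hgen
    _ = _ := by rw [hI, hJ]; exact span_range_vecMul_of_mul_eq_one _ hQP

/-- for the Heisenberg double `H` of `U(g)` with source `α` and target `β`
(an algebra antihomomorphism, encoded on `U^op`), with `β(x̂_μ) = ŷ_μ = Σ_σ α(x̂_σ)·(O^{-1})^σ_μ`
for an invertible matrix `O` (representing `e^C`), the right ideal of `H ⊗ H` generated by
`{β(u) ⊗ 1 - 1 ⊗ α(u) : u ∈ U(g)}` equals the right ideal generated by the `n` elements
`x̂_ρ ⊗ 1 - O^τ_ρ ⊗ x̂_τ`, `ρ = 1,…,n`. -/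
theorem statement7 {k U H : Type*} [Field k] [Ring U] [Ring H]
    [Algebra k U] [Algebra k H] {n : ℕ}
    (α : U →ₐ[k] H) (β : Uᵐᵒᵖ →ₐ[k] H)
    (hcomm : ∀ u v : U, Commute (α u) (β (op v)))
    (xh : Fin n → U)
    (hgen : Algebra.adjoin k (Set.range xh) = ⊤)
    (O Oinv : Fin n → Fin n → H)
    (hO1 : ∀ a b : Fin n, ∑ s : Fin n, O a s * Oinv s b = if a = b then 1 else 0)
    (hO2 : ∀ a b : Fin n, ∑ s : Fin n, Oinv a s * O s b = if a = b then 1 else 0)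
    (hβ : ∀ μ : Fin n, β (op (xh μ)) = ∑ σ : Fin n, α (xh σ) * Oinv σ μ) :
    Submodule.span (H ⊗[k] H)ᵐᵒᵖ
        {z : H ⊗[k] H | ∃ u : U, z = β (op u) ⊗ₜ[k] (1 : H) - (1 : H) ⊗ₜ[k] α u}
      = Submodule.span (H ⊗[k] H)ᵐᵒᵖ
        (Set.range fun ρ : Fin n =>
          α (xh ρ) ⊗ₜ[k] (1 : H) - ∑ τ : Fin n, O τ ρ ⊗ₜ[k] α (xh τ)) :=
  statement7_general α β xh hgen O Oinv hO1 hO2 hβ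
end

section
/- Let H be a left A-bialgebroid and F ∈ H ⊗_A H a counital 2-cocycle (Drinfeld twist), i.e., (Δ ⊗_A id)(F)·(F ⊗_A 1) = (id ⊗_A Δ)(F)·(1 ⊗_A F) and (ε ⊗ id)(F) = 1 = (id ⊗ ε)(F). Then the product a ⋆ b := ε(F^{(1)} α(a)) · ε(F^{(2)} α(b)) — written a ⋆ b = (F^{(1)} ▸ a)(F^{(2)} ▸ b) — is associative on A with the same unit 1_A. -/
open TensorProduct MulOpposite

/-! The twisted product is the pairing `a ⋆ b = P a b F`. Both bracketings of a triple product
are values of one trilinear map `(g ⊗ g') ⊗ g'' ↦ (g ▸ a)(g' ▸ b)(g'' ▸ c)`: compatibility of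
the action with `Δ` turns `(a ⋆ b) ⋆ c` into its value at `(Δ ⊗ id)(F)·(F ⊗ 1)` and `a ⋆ (b ⋆ c)`
into its value at `(id ⊗ Δ)(F)·(1 ⊗ F)`. Since `ε` is an `A`-bimodule map, the trilinear map
kills the right ideal `I₃`, so the cocycle condition makes the two values agree. Counitality of
`F` gives the unit. -/

theorem map_eq_zero_of_mem_span_mulOpposite {R M F : Type*} [Semiring R] [AddCommMonoid M]
    [FunLike F R M] [AddMonoidHomClass F R M] (f : F) {S : Set R}
    (hS : ∀ s ∈ S, ∀ z, f (s * z) = 0) {w : R} (hw : w ∈ Submodule.span Rᵐᵒᵖ S) :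
    f w = 0 := by
  suffices ∀ z, f (w * z) = 0 by simpa using this 1
  induction hw using Submodule.span_induction with
  | mem s hs => exact hS s hs
  | zero => simp
  | add x y _ _ hx hy => intro z; rw [add_mul, map_add, hx, hy, add_zero]
  | smul m x _ hx => intro z; rw [← op_unop m, op_smul_eq_mul, mul_assoc]; exact hx _

namespace Bialgebroid

variable {k A H : Type*} [CommRing k] [Ring A] [Ring H] [Algebra k A] [Algebra k H]
  (α : A →ₐ[k] H) (ε : H →ₗ[k] A)

/-- `act α ε a h` is the paper's `h ▸ a`. -/
def act (a : A) : H →ₗ[k] A :=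
  ε ∘ₗ LinearMap.mulRight k (α a)

def pair (a b : A) : H ⊗[k] H →ₗ[k] A :=
  LinearMap.mul' k A ∘ₗ TensorProduct.map (act α ε a) (act α ε b)

def triple (a b c : A) : (H ⊗[k] H) ⊗[k] H →ₗ[k] A :=
  LinearMap.mul' k A ∘ₗ TensorProduct.map (pair α ε a b) (act α ε c)

@[simp]
theorem act_apply (a : A) (h : H) : act α ε a h = ε (h * α a) := rfl

@[simp]
theorem pair_tmul (a b : A) (g g' : H) :
    pair α ε a b (g ⊗ₜ g') = act α ε a g * act α ε b g' := rfl

@[simp]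
theorem triple_tmul (a b c : A) (w : H ⊗[k] H) (g : H) :
    triple α ε a b c (w ⊗ₜ g) = pair α ε a b w * act α ε c g := rfl

theorem triple_assoc_symm_tmul (a b c : A) (g : H) (x : H ⊗[k] H) :
    triple α ε a b c ((TensorProduct.assoc k H H H).symm (g ⊗ₜ x))
      = act α ε a g * pair α ε b c x := by
  induction x using TensorProduct.induction_on with
  | zero => simp
  | add x y hx hy => rw [tmul_add, map_add, map_add, hx, hy, map_add, mul_add]
  | tmul g' g'' => simp [mul_assoc]

variable {α ε}

theorem act_one (hεα : ∀ a : A, ε (α a) = a) (a : A) : act α ε a 1 = a := by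
  simp [hεα]

theorem act_source_mul (hsource : ∀ (c : A) (h : H), ε (α c * h) = c * ε h) (a c : A) (h : H) :
    act α ε a (α c * h) = c * act α ε a h := by
  simp [mul_assoc, hsource]

theorem act_target_mul {β : Aᵐᵒᵖ →ₐ[k] H}
    (htarget : ∀ (c : A) (h : H), ε (β (op c) * h) = ε h * c) (a c : A) (h : H) :
    act α ε a (β (op c) * h) = act α ε a h * c := by
  simp [mul_assoc, htarget]

theorem pair_one_left (hsource : ∀ (c : A) (h : H), ε (α c * h) = c * ε h)
    {E1 : H ⊗[k] H →ₗ[k] H} (hE1 : ∀ g g' : H, E1 (g ⊗ₜ[k] g') = α (ε g) * g')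
    (a : A) (w : H ⊗[k] H) : pair α ε 1 a w = act α ε a (E1 w) := by
  induction w using TensorProduct.induction_on with
  | zero => simp
  | add x y hx hy => rw [map_add, map_add, map_add, hx, hy]
  | tmul g g' => simp [hE1, act_source_mul hsource]

theorem pair_one_right {β : Aᵐᵒᵖ →ₐ[k] H}
    (htarget : ∀ (c : A) (h : H), ε (β (op c) * h) = ε h * c)
    {E2 : H ⊗[k] H →ₗ[k] H} (hE2 : ∀ g g' : H, E2 (g ⊗ₜ[k] g') = β (op (ε g')) * g)
    (a : A) (w : H ⊗[k] H) : pair α ε a 1 w = act α ε a (E2 w) := by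
  induction w using TensorProduct.induction_on with
  | zero => simp
  | add x y hx hy => rw [map_add, map_add, map_add, hx, hy]
  | tmul g g' => simp [hE2, act_target_mul htarget]

theorem pair_pair_left {Δ : H →ₗ[k] H ⊗[k] H}
    (hact : ∀ (h : H) (w : H ⊗[k] H) (a b : A),
      ε (h * α (pair α ε a b w)) = pair α ε a b (Δ h * w))
    (a b c : A) (F w : H ⊗[k] H) :
    pair α ε (pair α ε a b F) c w
      = triple α ε a b c (LinearMap.rTensor H Δ w * (F ⊗ₜ[k] (1 : H))) := by
  induction w using TensorProduct.induction_on with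
  | zero => simp
  | add x y hx hy => rw [map_add, hx, hy, map_add, add_mul, map_add]
  | tmul g g' => simp [Algebra.TensorProduct.tmul_mul_tmul, hact]

theorem pair_pair_right {Δ : H →ₗ[k] H ⊗[k] H}
    (hact : ∀ (h : H) (w : H ⊗[k] H) (a b : A),
      ε (h * α (pair α ε a b w)) = pair α ε a b (Δ h * w))
    (a b c : A) (F w : H ⊗[k] H) :
    pair α ε a (pair α ε b c F) w
      = triple α ε a b c ((TensorProduct.assoc k H H H).symm
          (LinearMap.lTensor H Δ w * ((1 : H) ⊗ₜ[k] F))) := by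
  induction w using TensorProduct.induction_on with
  | zero => simp
  | add x y hx hy => rw [map_add, hx, hy, map_add, add_mul, map_add, map_add]
  | tmul g g' =>
    simp [Algebra.TensorProduct.tmul_mul_tmul, triple_assoc_symm_tmul, hact]

theorem triple_eq_zero_of_mem_span {β : Aᵐᵒᵖ →ₐ[k] H}
    (hsource : ∀ (c : A) (h : H), ε (α c * h) = c * ε h)
    (htarget : ∀ (c : A) (h : H), ε (β (op c) * h) = ε h * c) (a b c : A)
    {w : (H ⊗[k] H) ⊗[k] H}
    (hw : w ∈ Submodule.span ((H ⊗[k] H) ⊗[k] H)ᵐᵒᵖ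
      ({w | ∃ c : A, w = (β (op c) ⊗ₜ[k] (1 : H)) ⊗ₜ[k] (1 : H)
            - ((1 : H) ⊗ₜ[k] α c) ⊗ₜ[k] (1 : H)} ∪
       {w | ∃ c : A, w = ((1 : H) ⊗ₜ[k] β (op c)) ⊗ₜ[k] (1 : H)
            - ((1 : H) ⊗ₜ[k] (1 : H)) ⊗ₜ[k] α c})) :
    triple α ε a b c w = 0 := by
  refine map_eq_zero_of_mem_span_mulOpposite _ (fun s hs z => ?_) hw
  suffices triple α ε a b c ∘ₗ LinearMap.mulLeft k s = 0 from LinearMap.congr_fun this z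
  refine TensorProduct.ext_threefold fun g g' g'' => ?_
  rcases hs with ⟨c', rfl⟩ | ⟨c', rfl⟩ <;>
    simp [sub_mul, Algebra.TensorProduct.tmul_mul_tmul, act_source_mul hsource,
      act_target_mul htarget, mul_assoc]

end Bialgebroid

theorem statement12_general {k A H : Type*} [CommRing k] [Ring A] [Ring H]
    [Algebra k A] [Algebra k H]
    (α : A →ₐ[k] H) (β : Aᵐᵒᵖ →ₐ[k] H)
    (ε : H →ₗ[k] A)
    (hεα : ∀ a : A, ε (α a) = a)
    (hbimod : ∀ (a b : A) (h : H), ε (α a * β (op b) * h) = a * ε h * b)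
    -- a chosen lift `Δ : H → H ⊗ H` of the coproduct
    (Δ : H →ₗ[k] H ⊗[k] H)
    -- `(ε ⊗ id)` and `(id ⊗ ε)` composed with multiplication, characterized on pure tensors
    (E1 : H ⊗[k] H →ₗ[k] H) (hE1 : ∀ g g' : H, E1 (g ⊗ₜ[k] g') = α (ε g) * g')
    (E2 : H ⊗[k] H →ₗ[k] H) (hE2 : ∀ g g' : H, E2 (g ⊗ₜ[k] g') = β (op (ε g')) * g)
    -- the pairing `P a b (Σ g ⊗ g') = Σ (g ▸ a)(g' ▸ b)` from Lemma 2.2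
    (P : A → A → (H ⊗[k] H →ₗ[k] A))
    (hP : ∀ (a b : A) (g g' : H), P a b (g ⊗ₜ[k] g') = ε (g * α a) * ε (g' * α b))
    -- compatibility of the action with the coproduct (bialgebroid axiom (i))
    (hact : ∀ (h : H) (w : H ⊗[k] H) (a b : A),
      ε (h * α (P a b w)) = P a b (Δ h * w))
    -- the twist
    (F : H ⊗[k] H)
    -- cocycle condition modulo `I₃`
    (hcoc : (LinearMap.rTensor H Δ) F * (F ⊗ₜ[k] (1 : H))
        - (TensorProduct.assoc k H H H).symm
            ((LinearMap.lTensor H Δ) F * ((1 : H) ⊗ₜ[k] F))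
      ∈ Submodule.span ((H ⊗[k] H) ⊗[k] H)ᵐᵒᵖ
          ({w | ∃ c : A, w = (β (op c) ⊗ₜ[k] (1 : H)) ⊗ₜ[k] (1 : H)
                - ((1 : H) ⊗ₜ[k] α c) ⊗ₜ[k] (1 : H)} ∪
           {w | ∃ c : A, w = ((1 : H) ⊗ₜ[k] β (op c)) ⊗ₜ[k] (1 : H)
                - ((1 : H) ⊗ₜ[k] (1 : H)) ⊗ₜ[k] α c}))
    -- counitality of the twist
    (hFcu1 : E1 F = 1) (hFcu2 : E2 F = 1) :
    (∀ a b c : A, P (P a b F) c F = P a (P b c F) F)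
    ∧ (∀ a : A, P 1 a F = a) ∧ (∀ a : A, P a 1 F = a) := by
  open Bialgebroid in
  obtain rfl : P = pair α ε := funext₂ fun a b => TensorProduct.ext' (hP a b)
  have hsource (c : A) (h : H) : ε (α c * h) = c * ε h := by simpa using hbimod c 1 h
  have htarget (c : A) (h : H) : ε (β (op c) * h) = ε h * c := by simpa using hbimod 1 c h
  refine ⟨fun a b c => ?_, fun a => ?_, fun a => ?_⟩
  · rw [pair_pair_left hact, pair_pair_right hact, ← sub_eq_zero, ← map_sub]
    exact triple_eq_zero_of_mem_span hsource htarget a b c hcoc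
  · rw [pair_one_left hsource hE1, hFcu1, act_one hεα]
  · rw [pair_one_right htarget hE2, hFcu2, act_one hεα]

/-- Xu's theorem, associativity of the twisted base product: let `H` be a left
`A`-bialgebroid (source `α`, target `β`, a lift `Δ` of the coproduct, counit `ε`, with the
usual axioms holding on representatives modulo the kernels `I₂ ⊂ H⊗H`, `I₃ ⊂ (H⊗H)⊗H` of the
projections to the tensor products over `A`), and let `F ∈ H ⊗ H` represent a counital
2-cocycle: `(Δ⊗id)(F)·(F⊗1) ≡ (id⊗Δ)(F)·(1⊗F) mod I₃`, `(ε⊗id)(F) = 1 = (id⊗ε)(F)`.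
Then `a ⋆ b := (F⁽¹⁾ ▸ a)(F⁽²⁾ ▸ b) = ε(F⁽¹⁾α(a))·ε(F⁽²⁾α(b))` is associative with unit `1`. -/
theorem statement12 {k A H : Type*} [CommRing k] [Ring A] [Ring H]
    [Algebra k A] [Algebra k H]
    (α : A →ₐ[k] H) (β : Aᵐᵒᵖ →ₐ[k] H)
    (hcomm : ∀ a b : A, Commute (α a) (β (op b)))
    (ε : H →ₗ[k] A)
    (hε1 : ε 1 = 1)
    (hεα : ∀ a : A, ε (α a) = a)
    (hbimod : ∀ (a b : A) (h : H), ε (α a * β (op b) * h) = a * ε h * b)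
    (hchar : ∀ g h : H, ε (g * α (ε h)) = ε (g * h))
    -- a chosen lift `Δ : H → H ⊗ H` of the coproduct
    (Δ : H →ₗ[k] H ⊗[k] H)
    -- `(ε ⊗ id)` and `(id ⊗ ε)` composed with multiplication, characterized on pure tensors
    (E1 : H ⊗[k] H →ₗ[k] H) (hE1 : ∀ g g' : H, E1 (g ⊗ₜ[k] g') = α (ε g) * g')
    (E2 : H ⊗[k] H →ₗ[k] H) (hE2 : ∀ g g' : H, E2 (g ⊗ₜ[k] g') = β (op (ε g')) * g)
    -- counit axioms of the bialgebroid
    (hcount1 : ∀ h : H, E1 (Δ h) = h)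
    (hcount2 : ∀ h : H, E2 (Δ h) = h)
    -- `Δ` is multiplicative and unital modulo `I₂`
    (hΔ1 : Δ 1 - (1 : H) ⊗ₜ[k] (1 : H) ∈ Submodule.span (H ⊗[k] H)ᵐᵒᵖ
      {w : H ⊗[k] H | ∃ c : A, w = β (op c) ⊗ₜ[k] (1 : H) - (1 : H) ⊗ₜ[k] α c})
    (hΔmul : ∀ g h : H, Δ (g * h) - Δ g * Δ h ∈ Submodule.span (H ⊗[k] H)ᵐᵒᵖ
      {w : H ⊗[k] H | ∃ c : A, w = β (op c) ⊗ₜ[k] (1 : H) - (1 : H) ⊗ₜ[k] α c})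
    -- the pairing `P a b (Σ g ⊗ g') = Σ (g ▸ a)(g' ▸ b)` from Lemma 2.2
    (P : A → A → (H ⊗[k] H →ₗ[k] A))
    (hP : ∀ (a b : A) (g g' : H), P a b (g ⊗ₜ[k] g') = ε (g * α a) * ε (g' * α b))
    -- compatibility of the action with the coproduct (bialgebroid axiom (i))
    (hact : ∀ (h : H) (w : H ⊗[k] H) (a b : A),
      ε (h * α (P a b w)) = P a b (Δ h * w))
    -- the twist
    (F : H ⊗[k] H)
    -- cocycle condition modulo `I₃`
    (hcoc : (LinearMap.rTensor H Δ) F * (F ⊗ₜ[k] (1 : H))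
        - (TensorProduct.assoc k H H H).symm
            ((LinearMap.lTensor H Δ) F * ((1 : H) ⊗ₜ[k] F))
      ∈ Submodule.span ((H ⊗[k] H) ⊗[k] H)ᵐᵒᵖ
          ({w | ∃ c : A, w = (β (op c) ⊗ₜ[k] (1 : H)) ⊗ₜ[k] (1 : H)
                - ((1 : H) ⊗ₜ[k] α c) ⊗ₜ[k] (1 : H)} ∪
           {w | ∃ c : A, w = ((1 : H) ⊗ₜ[k] β (op c)) ⊗ₜ[k] (1 : H)
                - ((1 : H) ⊗ₜ[k] (1 : H)) ⊗ₜ[k] α c}))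
    -- counitality of the twist
    (hFcu1 : E1 F = 1) (hFcu2 : E2 F = 1) :
    (∀ a b c : A, P (P a b F) c F = P a (P b c F) F)
    ∧ (∀ a : A, P 1 a F = a) ∧ (∀ a : A, P a 1 F = a) :=
  statement12_general α β ε hεα hbimod Δ E1 hE1 E2 hE2 P hP hact F hcoc hFcu1 hFcu2
end
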